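/- arXiv:1907.02689 — 2 statements merged into one kernel-verified Lean document; each statement's English description precedes it below -/
import Mathlib

section
/- With the third Semaev summation polynomial S₃(X₁,X₂,X₃) = 4σ₁(σ₃+b) − (σ₂−a)² for the curve Y² = X³ + aX + b (where σᵢ are the elementary symmetric polynomials in X₁,X₂,X₃), for any three affine points Q₁, Q₂, Q₃ on the curve with abscissae x₁, x₂, x₃, we have S₃(x₁,x₂,x₃) = 0 if and only if there exist signs e₁, e₂, e₃ ∈ {−1,1} with e₁Q₁ + e₂Q₂ + e₃Q₃ = O. -/
/-!
For `x₁ ≠ x₂`, `S₃(x₁, x₂, X)` is `-(x₁ - x₂)²` times the monic quadratic in `X` whose roots are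
the abscissae of `P₁ + P₂` and `P₁ - P₂`. For `x₁ = x₂` it degenerates to a linear polynomial
vanishing exactly at the abscissa of `2P₁`, or to the nonzero constant `-(3x₁² + a)²` when `P₁` is
2-torsion (nonsingularity). On the group side, `±P₁ ± P₂ ± P₃ = O` means `P₁ ± P₂ = ±P₃`, and a
point is `±P₃` iff it is affine with abscissa `x₃`.
-/

section

variable {G : Type*} [AddCommGroup G]

lemma exists_isUnit_zsmul_iff (P : G) (p : G → Prop) :
    (∃ e : ℤ, IsUnit e ∧ p (e • P)) ↔ p P ∨ p (-P) := by
  constructor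
  · rintro ⟨e, he, hp⟩
    rcases Int.isUnit_iff.mp he with rfl | rfl
    · exact .inl (by rwa [one_zsmul] at hp)
    · exact .inr (by rwa [neg_one_zsmul] at hp)
  · rintro (hp | hp)
    · exact ⟨1, isUnit_one, by rwa [one_zsmul]⟩
    · exact ⟨-1, isUnit_one.neg, by rwa [neg_one_zsmul]⟩

lemma exists_isUnit_zsmul_add_eq_zero_iff (P₁ P₂ P₃ : G) :
    (∃ e₁ e₂ e₃ : ℤ, IsUnit e₁ ∧ IsUnit e₂ ∧ IsUnit e₃ ∧ e₁ • P₁ + e₂ • P₂ + e₃ • P₃ = 0) ↔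
      ∃ e₂ : ℤ, IsUnit e₂ ∧ ∃ e₃ : ℤ, IsUnit e₃ ∧ P₁ + e₂ • P₂ = e₃ • P₃ := by
  constructor
  · rintro ⟨e₁, e₂, e₃, he₁, he₂, he₃, h⟩
    refine ⟨e₁ * e₂, he₁.mul he₂, -(e₁ * e₃), (he₁.mul he₃).neg, ?_⟩
    have h' := congrArg (e₁ • ·) h
    simp only [smul_add, smul_smul, Int.isUnit_mul_self he₁, one_zsmul, smul_zero] at h'
    rw [neg_zsmul, eq_neg_iff_add_eq_zero, h']
  · rintro ⟨e₂, he₂, e₃, he₃, h⟩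
    exact ⟨1, e₂, -e₃, isUnit_one, he₂, he₃.neg, by rw [one_zsmul, h, neg_zsmul, add_neg_cancel]⟩

end

namespace WeierstrassCurve.Affine

section

variable {R : Type*} [CommRing R] (W : Affine R)

def semaev₃ (x₁ x₂ x₃ : R) : R :=
  4 * (x₁ + x₂ + x₃) * (x₁ * x₂ * x₃ + W.a₆) - (x₁ * x₂ + x₁ * x₃ + x₂ * x₃ - W.a₄) ^ 2

variable {W} [W.IsShortNF]

lemma negY_of_isShortNF (x y : R) : W.negY x y = -y := by
  simp [negY]

lemma equation_iff_of_isShortNF (x y : R) :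
    W.Equation x y ↔ y ^ 2 = x ^ 3 + W.a₄ * x + W.a₆ := by
  simp [equation_iff]

lemma two_mul_ne_zero_of_ne_negY {x y : R} (hy : y ≠ W.negY x y) : 2 * y ≠ 0 := by
  rwa [negY_of_isShortNF, ne_eq, ← sub_eq_zero, sub_neg_eq_add, ← two_mul] at hy

end

section

variable {F : Type*} [Field F] {W : Affine F}

lemma Point.some_add_some_eq_or_eq_neg_iff [DecidableEq F] {x₁ y₁ x₂ y₂ x₃ y₃ : F}
    (h₁ : W.Nonsingular x₁ y₁) (h₂ : W.Nonsingular x₂ y₂) (h₃ : W.Nonsingular x₃ y₃) :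
    some _ _ h₁ + some _ _ h₂ = some _ _ h₃ ∨ some _ _ h₁ + some _ _ h₂ = -some _ _ h₃ ↔
      ¬(x₁ = x₂ ∧ y₁ = W.negY x₂ y₂) ∧ x₃ = W.addX x₁ x₂ (W.slope x₁ x₂ y₁ y₂) := by
  by_cases hxy : x₁ = x₂ ∧ y₁ = W.negY x₂ y₂
  · rw [add_of_Y_eq hxy.1 hxy.2, neg_some]
    exact iff_of_false (not_or.mpr ⟨(some_ne_zero _).symm, (some_ne_zero _).symm⟩) (·.1 hxy)
  · simp only [add_some hxy, neg_some, some.injEq, hxy, not_false_eq_true, true_and,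
      ← and_or_left]
    refine ⟨fun h => h.1.symm, fun hx => ⟨hx.symm, ?_⟩⟩
    exact Y_eq_of_X_eq (nonsingular_add h₁ h₂ hxy).1 h₃.1 hx.symm

variable [W.IsShortNF]

lemma semaev₃_self_ne_zero_of_Y_eq {x y : F} (h : W.Nonsingular x y) (hy : y = W.negY x y)
    (x₃ : F) : W.semaev₃ x x x₃ ≠ 0 := by
  obtain ⟨hE, hX | hY⟩ := (nonsingular_iff x y).mp h
  · rw [a₁_of_isShortNF, a₂_of_isShortNF] at hX
    rw [equation_iff_of_isShortNF] at hE
    rw [negY_of_isShortNF] at hy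
    have : W.semaev₃ x x x₃ = -(3 * x ^ 2 + W.a₄) ^ 2 := by
      rw [semaev₃]
      linear_combination -(4 * x₃ + 8 * x) * hE + (2 * x₃ + 4 * x) * y * hy
    rw [this, neg_ne_zero]
    exact pow_ne_zero 2 (by simpa using hX.symm)
  · exact absurd hy hY

variable [DecidableEq F]

lemma semaev₃_of_X_ne {x₁ y₁ x₂ y₂ : F} (h₁ : W.Equation x₁ y₁) (h₂ : W.Equation x₂ y₂)
    (hx : x₁ ≠ x₂) (x₃ : F) :
    W.semaev₃ x₁ x₂ x₃ = -(x₁ - x₂) ^ 2 * (x₃ - W.addX x₁ x₂ (W.slope x₁ x₂ y₁ y₂)) *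
      (x₃ - W.addX x₁ x₂ (W.slope x₁ x₂ y₁ (W.negY x₂ y₂))) := by
  rw [equation_iff_of_isShortNF] at h₁ h₂
  have hd : x₁ - x₂ ≠ 0 := sub_ne_zero.mpr hx
  rw [slope_of_X_ne hx, slope_of_X_ne hx, negY_of_isShortNF, addX, addX, a₁_of_isShortNF,
    a₂_of_isShortNF, semaev₃]
  field_simp
  set c := (x₁ - x₂) ^ 2 * (x₃ + x₁ + x₂)
  linear_combination (y₁ ^ 2 + (x₁ ^ 3 + W.a₄ * x₁ + W.a₆) - 2 * c - 2 * y₂ ^ 2) * h₁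
    + (y₂ ^ 2 + (x₂ ^ 3 + W.a₄ * x₂ + W.a₆) - 2 * c - 2 * (x₁ ^ 3 + W.a₄ * x₁ + W.a₆)) * h₂

lemma semaev₃_self_of_Y_ne {x y : F} (h : W.Equation x y) (hy : y ≠ W.negY x y) (x₃ : F) :
    W.semaev₃ x x x₃ = (2 * y) ^ 2 * (x₃ - W.addX x x (W.slope x x y y)) := by
  rw [equation_iff_of_isShortNF] at h
  rw [slope_of_Y_ne rfl hy, addX, a₁_of_isShortNF, a₂_of_isShortNF, semaev₃, negY_of_isShortNF,
    sub_neg_eq_add, ← two_mul, mul_zero, zero_mul, add_zero, zero_mul, sub_zero]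
  have hsq : (2 * y) ^ 2 * ((3 * x ^ 2 + W.a₄) / (2 * y)) ^ 2 = (3 * x ^ 2 + W.a₄) ^ 2 := by
    rw [← mul_pow, mul_div_cancel₀ _ (two_mul_ne_zero_of_ne_negY hy)]
  linear_combination -(4 * x₃ + 8 * x) * h + hsq

lemma semaev₃_self_eq_zero_iff {x y x₃ : F} (h : W.Nonsingular x y) :
    W.semaev₃ x x x₃ = 0 ↔ y ≠ W.negY x y ∧ x₃ = W.addX x x (W.slope x x y y) := by
  by_cases hy : y = W.negY x y
  · exact iff_of_false (semaev₃_self_ne_zero_of_Y_eq h hy x₃) (·.1 hy)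
  · rw [semaev₃_self_of_Y_ne h.1 hy, mul_eq_zero, sub_eq_zero,
      or_iff_right (pow_ne_zero 2 (two_mul_ne_zero_of_ne_negY hy))]
    exact (and_iff_right hy).symm

lemma semaev₃_eq_zero_iff {x₁ y₁ x₂ y₂ x₃ : F} (h₁ : W.Nonsingular x₁ y₁)
    (h₂ : W.Nonsingular x₂ y₂) :
    W.semaev₃ x₁ x₂ x₃ = 0 ↔
      ¬(x₁ = x₂ ∧ y₁ = W.negY x₂ y₂) ∧ x₃ = W.addX x₁ x₂ (W.slope x₁ x₂ y₁ y₂) ∨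
      ¬(x₁ = x₂ ∧ y₁ = W.negY x₂ (W.negY x₂ y₂)) ∧
        x₃ = W.addX x₁ x₂ (W.slope x₁ x₂ y₁ (W.negY x₂ y₂)) := by
  by_cases hx : x₁ = x₂
  · subst hx
    rcases Y_eq_of_X_eq h₂.1 h₁.1 rfl with rfl | rfl <;>
      simp only [negY_negY, true_and, not_true_eq_false, false_and, or_false, false_or] <;>
      exact semaev₃_self_eq_zero_iff h₁
  · rw [semaev₃_of_X_ne h₁.1 h₂.1 hx]
    simp only [mul_eq_zero, neg_eq_zero, pow_eq_zero_iff two_ne_zero, sub_eq_zero, hx, false_or,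
      false_and, not_false_eq_true, true_and]

end

end WeierstrassCurve.Affine

open Classical in
theorem stmt_10_general (K : Type) [Field K]
    (a b : K) (W : WeierstrassCurve.Affine K)
    (hW : W = { a₁ := 0, a₂ := 0, a₃ := 0, a₄ := a, a₆ := b })
    (x₁ y₁ x₂ y₂ x₃ y₃ : K)
    (h₁ : W.Nonsingular x₁ y₁) (h₂ : W.Nonsingular x₂ y₂) (h₃ : W.Nonsingular x₃ y₃) :
    4 * (x₁ + x₂ + x₃) * (x₁ * x₂ * x₃ + b)
        - (x₁ * x₂ + x₁ * x₃ + x₂ * x₃ - a) ^ 2 = 0 ↔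
      ∃ e₁ e₂ e₃ : ℤ, (e₁ = 1 ∨ e₁ = -1) ∧ (e₂ = 1 ∨ e₂ = -1) ∧ (e₃ = 1 ∨ e₃ = -1) ∧
        e₁ • (WeierstrassCurve.Affine.Point.some _ _ h₁ : W.Point)
          + e₂ • (WeierstrassCurve.Affine.Point.some _ _ h₂ : W.Point)
          + e₃ • (WeierstrassCurve.Affine.Point.some _ _ h₃ : W.Point) = 0 := by
  have : W.IsShortNF := by subst hW; exact ⟨rfl, rfl, rfl⟩
  have ha : W.a₄ = a := by rw [hW]
  have hb : W.a₆ = b := by rw [hW]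
  set P₁ := WeierstrassCurve.Affine.Point.some _ _ h₁
  set P₂ := WeierstrassCurve.Affine.Point.some _ _ h₂
  simp only [← Int.isUnit_iff]
  rw [exists_isUnit_zsmul_add_eq_zero_iff,
    exists_isUnit_zsmul_iff _ fun Q => ∃ e₃ : ℤ, IsUnit e₃ ∧ P₁ + Q = e₃ • _,
    exists_isUnit_zsmul_iff _ fun R => P₁ + P₂ = R,
    exists_isUnit_zsmul_iff _ fun R => P₁ + -P₂ = R]
  rw [← ha, ← hb]
  change W.semaev₃ x₁ x₂ x₃ = 0 ↔ _
  rw [WeierstrassCurve.Affine.semaev₃_eq_zero_iff h₁ h₂, WeierstrassCurve.Affine.Point.neg_some h₂,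
    WeierstrassCurve.Affine.Point.some_add_some_eq_or_eq_neg_iff,
    WeierstrassCurve.Affine.Point.some_add_some_eq_or_eq_neg_iff]

open Classical in
/-- For the curve `Y² = X³ + aX + b` (char `≠ 2, 3`) with third Semaev summation polynomial
`S₃ = 4σ₁(σ₃+b) − (σ₂−a)²`, three affine points `Q₁, Q₂, Q₃` with abscissae `x₁, x₂, x₃`
satisfy `S₃(x₁,x₂,x₃) = 0` iff `e₁Q₁ + e₂Q₂ + e₃Q₃ = O` for some signs `eᵢ ∈ {−1, 1}`. -/
theorem stmt_10 (K : Type) [Field K] (h2 : (2 : K) ≠ 0) (h3 : (3 : K) ≠ 0)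
    (a b : K) (W : WeierstrassCurve.Affine K)
    (hW : W = { a₁ := 0, a₂ := 0, a₃ := 0, a₄ := a, a₆ := b })
    (hΔ : W.Δ ≠ 0)
    (x₁ y₁ x₂ y₂ x₃ y₃ : K)
    (h₁ : W.Nonsingular x₁ y₁) (h₂ : W.Nonsingular x₂ y₂) (h₃ : W.Nonsingular x₃ y₃) :
    4 * (x₁ + x₂ + x₃) * (x₁ * x₂ * x₃ + b)
        - (x₁ * x₂ + x₁ * x₃ + x₂ * x₃ - a) ^ 2 = 0 ↔
      ∃ e₁ e₂ e₃ : ℤ, (e₁ = 1 ∨ e₁ = -1) ∧ (e₂ = 1 ∨ e₂ = -1) ∧ (e₃ = 1 ∨ e₃ = -1) ∧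
        e₁ • (WeierstrassCurve.Affine.Point.some _ _ h₁ : W.Point)
          + e₂ • (WeierstrassCurve.Affine.Point.some _ _ h₂ : W.Point)
          + e₃ • (WeierstrassCurve.Affine.Point.some _ _ h₃ : W.Point) = 0 :=
  stmt_10_general K a b W hW x₁ y₁ x₂ y₂ x₃ y₃ h₁ h₂ h₃
end

section
/- Let E be an elliptic curve over F_q with a rational point P₁ = (x₁, y₁), and let Φ: E → affine 3-space be the map Q ↦ (x_{Q−P₁}, x_Q, x_{Q+P₁}). Then Φ is injective on the set of points Q ∉ {O, P₁, −P₁}, provided P₁ does not have order 2: distinct such points have distinct image triples. -/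
/-- The abscissa of a nonsingular rational point on a Weierstrass curve
(`none` for the point at infinity). -/
def xcoord {K : Type} [Field K] {W : WeierstrassCurve.Affine K} : W.Point → Option K
  | .zero => none
  | @WeierstrassCurve.Affine.Point.some _ _ _ x _ _ => some x

/- The only competitor is `Q' = -Q`; then `f (Q + P) = f (-Q + P) = f (Q - P)`, so
`Q - P = ±(Q + P)`, i.e. `2 • P = 0` or `2 • Q = 0`. -/
theorem eq_of_apply_eq_of_apply_add_eq {G α : Type*} [AddCommGroup G] {f : G → α}
    (hf : ∀ R R', f R = f R' ↔ R' = R ∨ R' = -R) {P Q Q' : G} (hP : 2 • P ≠ 0)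
    (hQ : f Q = f Q') (hQP : f (Q + P) = f (Q' + P)) : Q = Q' := by
  rcases (hf Q Q').1 hQ with rfl | rfl
  · rfl
  have hsub : f (Q + P) = f (Q - P) := by
    rw [hQP, (hf (-Q + P) (Q - P)).2 (Or.inr (by abel))]
  rcases (hf (Q + P) (Q - P)).1 hsub with h | h
  · exact absurd (by rw [two_nsmul]; linear_combination (norm := abel_nf) -h) hP
  · have h2Q : Q + Q = 0 := by linear_combination (norm := abel_nf) h
    exact (neg_eq_of_add_eq_zero_left h2Q).symm

namespace WeierstrassCurve.Affine

variable {K : Type} [Field K] {W : WeierstrassCurve.Affine K}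

theorem xcoord_eq_xcoord_iff (R R' : W.Point) : xcoord R = xcoord R' ↔ R' = R ∨ R' = -R := by
  refine ⟨fun h => ?_, ?_⟩
  · rcases R with _ | @⟨x, y, hxy⟩ <;> rcases R' with _ | @⟨x', y', hxy'⟩
    · exact .inl rfl
    all_goals simp only [xcoord, reduceCtorEq, Option.some_inj] at h
    subst h
    rcases Y_eq_of_X_eq hxy'.1 hxy.1 rfl with rfl | rfl
    · exact .inl rfl
    · exact .inr (Point.neg_some hxy).symm
  · rintro (h | h) <;> rw [h]
    cases R <;> rfl

end WeierstrassCurve.Affine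

open Classical in
theorem stmt_18_general (K : Type) [Field K] (W : WeierstrassCurve.Affine K)
    (P₁ : W.Point)
    (h2tors : 2 • P₁ ≠ 0) :
    ∀ Q Q' : W.Point, Q ≠ 0 → Q ≠ P₁ → Q ≠ -P₁ → Q' ≠ 0 → Q' ≠ P₁ → Q' ≠ -P₁ →
      (xcoord (Q - P₁), xcoord Q, xcoord (Q + P₁)) =
        (xcoord (Q' - P₁), xcoord Q', xcoord (Q' + P₁)) →
      Q = Q' := by
  intro Q Q' _ _ _ _ _ _ h
  simp only [Prod.mk.injEq] at h
  exact eq_of_apply_eq_of_apply_add_eq WeierstrassCurve.Affine.xcoord_eq_xcoord_iff h2tors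
    h.2.1 h.2.2

open Classical in
/-- For a reduced Weierstrass curve with rational point `P₁` not of order 2, the map
`Φ : Q ↦ (x_{Q−P₁}, x_Q, x_{Q+P₁})` is injective on points `Q ∉ {O, P₁, −P₁}`. -/
theorem stmt_18 (K : Type) [Field K] (W : WeierstrassCurve.Affine K)
    (ha1 : W.a₁ = 0) (ha2 : W.a₂ = 0) (ha3 : W.a₃ = 0)
    (x₁ y₁ : K) (h₁ : W.Nonsingular x₁ y₁)
    (P₁ : W.Point) (hP₁ : P₁ = WeierstrassCurve.Affine.Point.some _ _ h₁)
    (h2tors : 2 • P₁ ≠ 0) :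
    ∀ Q Q' : W.Point, Q ≠ 0 → Q ≠ P₁ → Q ≠ -P₁ → Q' ≠ 0 → Q' ≠ P₁ → Q' ≠ -P₁ →
      (xcoord (Q - P₁), xcoord Q, xcoord (Q + P₁)) =
        (xcoord (Q' - P₁), xcoord Q', xcoord (Q' + P₁)) →
      Q = Q' :=
  stmt_18_general K W P₁ h2tors
end
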